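/- Let h ∈ (0,1/4], λ = h/(1+8h)^{3/2}, and W_λ(x) = (λ/2)·((1 - ((1+8h)/h)x)·√(1 - 4(1+8h)x) - 1 + x/λ). Then the coefficient of x^1 in W_λ equals w_λ(1) = 1/2 - (1+2h)/(2√(1+8h)), and for p ≥ 2 the coefficient of x^p equals w_λ(p) = (2+16h)^p · ((2p-5)!!/p!) · ((1-4h)p + 6h)/(4(1+8h)^{3/2}). -/

import Mathlib

/-!
The binomial series gives `√(1 - c x) = ∑ sₙ xⁿ` with `sₙ = (1/2 choose n) (-c)ⁿ` for `|c x| < 1`,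
and the recursion `(n + 1) (a choose (n + 1)) = (a - n) (a choose n)` yields
`sₙ₊₁ = -(2n-1)!! cⁿ⁺¹ / (2ⁿ⁺¹ (n+1)!)`. With `c = 4(1+8h)` and `b = (1+8h)/h`,
`W_λ(x) = (λ/2) ((1 - b x) √(1 - c x) - 1) + x/2`, so the coefficient of `xⁿ⁺¹` is
`(λ/2) (sₙ₊₁ - b sₙ)` (plus `1/2` when `n = 0`), which simplifies to `w_λ(n+1)`.
-/

/-- The generating function `W_λ(x)` in closed form, with `λ` given explicitly. -/
noncomputable def Wfun (h lam x : ℝ) : ℝ :=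
  (lam / 2) * ((1 - ((1 + 8*h)/h) * x) * Real.sqrt (1 - 4*(1 + 8*h)*x) - 1 + x / lam)

/-- The coefficients `w_λ(p)`: `w_λ(0)=0`, `w_λ(1) = 1/2 - (1+2h)/(2√(1+8h))`, and for `p ≥ 2`,
`w_λ(p) = (2+16h)^p ((2p-5)!!/p!) ((1-4h)p+6h)/(4(1+8h)^{3/2})`, with `(-1)!! = 1`. -/
noncomputable def wcoef (h : ℝ) (p : ℕ) : ℝ :=
  if p = 0 then 0
  else if p = 1 then 1/2 - (1 + 2*h) / (2 * Real.sqrt (1 + 8*h))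
  else (2 + 16*h)^p *
    ((if p = 2 then 1 else (Nat.doubleFactorial (2*p - 5) : ℝ)) / (Nat.factorial p : ℝ)) *
    ((1 - 4*h) * p + 6*h) / (4 * (1 + 8*h) ^ ((3 : ℝ)/2))

open Polynomial
open scoped Nat

theorem Nat.doubleFactorial_two_mul_add_one_sub_one (n : ℕ) :
    (2 * (n + 1) - 1)‼ = (2 * n + 1) * (2 * n - 1)‼ := by
  rcases n with _ | n
  · rfl
  · rw [show 2 * (n + 1 + 1) - 1 = (2 * n + 1) + 2 by omega,
      show 2 * (n + 1) - 1 = 2 * n + 1 by omega, Nat.doubleFactorial_add_two]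
    ring

theorem Ring.choose_succ_mul {K : Type*} [Field K] [CharZero K] (a : K) (n : ℕ) :
    Ring.choose a (n + 1) * (n + 1) = Ring.choose a n * (a - n) := by
  rw [Ring.choose_eq_smul, Ring.choose_eq_smul, descPochhammer_succ_right, smeval_mul]
  simp only [smeval_sub, smeval_X, smeval_natCast, Nat.factorial_succ, smul_eq_mul, npow_one,
    npow_zero]
  push_cast
  field_simp
  simp

-- At `n = 0` the truncated `2 * n - 1` is `0` and `0‼ = 1`, matching `(-1)!! = 1`.
theorem Ring.choose_half_succ_mul_neg_one_pow (n : ℕ) :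
    Ring.choose (1 / 2 : ℝ) (n + 1) * (-1) ^ (n + 1) =
      -((2 * n - 1)‼ : ℝ) / (2 ^ (n + 1) * (n + 1)!) := by
  induction n with
  | zero => norm_num
  | succ n ih =>
    have hrec := Ring.choose_succ_mul (1 / 2 : ℝ) (n + 1)
    rw [Nat.doubleFactorial_two_mul_add_one_sub_one, Nat.factorial_succ]
    push_cast at ih hrec ⊢
    field_simp at ih hrec ⊢
    linear_combination
      ((n + 1)! : ℝ) * (-1) ^ (n + 2) * 2 ^ (n + 1) * hrec + (2 * (n : ℝ) + 1) * ih

noncomputable def sqrtOneSubMulCoeff (c : ℝ) (n : ℕ) : ℝ :=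
  Ring.choose (1 / 2 : ℝ) n * (-c) ^ n

theorem sqrtOneSubMulCoeff_zero (c : ℝ) : sqrtOneSubMulCoeff c 0 = 1 := by
  simp [sqrtOneSubMulCoeff]

theorem sqrtOneSubMulCoeff_succ (c : ℝ) (n : ℕ) :
    sqrtOneSubMulCoeff c (n + 1) =
      -((2 * n - 1)‼ : ℝ) * c ^ (n + 1) / (2 ^ (n + 1) * (n + 1)!) := by
  rw [sqrtOneSubMulCoeff, neg_eq_neg_one_mul, mul_pow, ← mul_assoc,
    Ring.choose_half_succ_mul_neg_one_pow]
  ring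

theorem Real.hasSum_choose_half_mul_pow {y : ℝ} (hy : |y| < 1) :
    HasSum (fun n => Ring.choose (1 / 2 : ℝ) n * y ^ n) (√(1 + y)) := by
  have hy' : y ∈ Metric.eball (0 : ℝ) 1 := by
    rw [Metric.mem_eball, edist_zero_right, ← ofReal_norm]
    simpa using hy
  simpa [binomialSeries, FormalMultilinearSeries.ofScalars_apply_eq, Real.sqrt_eq_rpow, mul_comm]
    using Real.one_add_rpow_hasFPowerSeriesOnBall_zero.hasSum hy'

theorem hasSum_sqrtOneSubMulCoeff {c x : ℝ} (hcx : |c * x| < 1) :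
    HasSum (fun n => sqrtOneSubMulCoeff c n * x ^ n) (√(1 - c * x)) := by
  rw [sub_eq_add_neg, ← neg_mul]
  simpa only [sqrtOneSubMulCoeff, mul_pow, mul_assoc]
    using Real.hasSum_choose_half_mul_pow (y := -c * x) (by rwa [neg_mul, abs_neg])

theorem HasSum.one_sub_mul_mul_pow {R : Type*} [CommRing R] [TopologicalSpace R]
    [IsTopologicalRing R] {a : ℕ → R} {b x S : R} (hS : HasSum (fun n => a n * x ^ n) S) :
    HasSum (fun n => (a (n + 1) - b * a n) * x ^ (n + 1)) ((1 - b * x) * S - a 0) := by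
  have htail : HasSum (fun n => a (n + 1) * x ^ (n + 1)) (S - a 0) := by
    simpa using (hasSum_nat_add_iff' 1).mpr hS
  have hcoeff : (fun n => (a (n + 1) - b * a n) * x ^ (n + 1))
      = fun n => a (n + 1) * x ^ (n + 1) - b * x * (a n * x ^ n) := by
    ext n
    ring
  rw [hcoeff, show (1 - b * x) * S - a 0 = S - a 0 - b * x * S by ring]
  exact htail.sub (hS.mul_left (b * x))

theorem Real.rpow_three_div_two_eq_mul_sqrt {a : ℝ} (ha : 0 ≤ a) :
    a ^ ((3 : ℝ) / 2) = a * √a := by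
  rw [show (3 : ℝ) / 2 = 1 + 1 / 2 by norm_num, Real.rpow_add' ha (by norm_num), Real.rpow_one,
    Real.sqrt_eq_rpow]

section Coefficients

variable {h : ℝ} (hpos : 0 < h)
include hpos

theorem wcoef_one :
    wcoef h 1 = h / (1 + 8 * h) ^ ((3 : ℝ) / 2) / 2 *
      (sqrtOneSubMulCoeff (4 * (1 + 8 * h)) 1
        - (1 + 8 * h) / h * sqrtOneSubMulCoeff (4 * (1 + 8 * h)) 0)
      + 1 / 2 := by
  have h8 : 0 < 1 + 8 * h := by linarith
  have hs : 0 < √(1 + 8 * h) := Real.sqrt_pos.mpr h8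
  rw [wcoef, Real.rpow_three_div_two_eq_mul_sqrt h8.le, sqrtOneSubMulCoeff_succ,
    sqrtOneSubMulCoeff_zero]
  simp only [one_ne_zero, if_false, if_true, mul_zero, Nat.zero_sub, Nat.doubleFactorial]
  field_simp
  ring

theorem wcoef_add_two (m : ℕ) :
    wcoef h (m + 2) = h / (1 + 8 * h) ^ ((3 : ℝ) / 2) / 2 *
      (sqrtOneSubMulCoeff (4 * (1 + 8 * h)) (m + 2)
        - (1 + 8 * h) / h * sqrtOneSubMulCoeff (4 * (1 + 8 * h)) (m + 1)) := by
  have h8 : 0 < 1 + 8 * h := by linarith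
  have hs : 0 < √(1 + 8 * h) := Real.sqrt_pos.mpr h8
  have hdf : (if m + 2 = 2 then 1 else ((2 * (m + 2) - 5)‼ : ℝ)) = (2 * m - 1)‼ := by
    rcases m with _ | m
    · simp
    · rw [if_neg (by omega), show 2 * (m + 1 + 2) - 5 = 2 * (m + 1) - 1 by omega]
  rw [wcoef, if_neg (by omega), if_neg (by omega), hdf, Real.rpow_three_div_two_eq_mul_sqrt h8.le,
    sqrtOneSubMulCoeff_succ, sqrtOneSubMulCoeff_succ, Nat.doubleFactorial_two_mul_add_one_sub_one,
    Nat.factorial_succ (m + 1), show 4 * (1 + 8 * h) = 2 * (2 + 16 * h) by ring, mul_pow, mul_pow]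
  push_cast
  field_simp
  ring

theorem wcoef_succ (n : ℕ) :
    wcoef h (n + 1) = h / (1 + 8 * h) ^ ((3 : ℝ) / 2) / 2 *
      (sqrtOneSubMulCoeff (4 * (1 + 8 * h)) (n + 1)
        - (1 + 8 * h) / h * sqrtOneSubMulCoeff (4 * (1 + 8 * h)) n)
      + if n = 0 then 1 / 2 else 0 := by
  rcases n with _ | m
  · exact wcoef_one hpos
  · rw [wcoef_add_two hpos, if_neg m.succ_ne_zero, add_zero]

end Coefficients

/-- the coefficients of the power series expansion of `W_λ` around `0`
are the `w_λ(p)` above. -/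
theorem stmt_3 (h : ℝ) (hh : h ∈ Set.Ioc (0 : ℝ) (1/4)) (lam : ℝ)
    (hlam : lam = h / (1 + 8*h) ^ ((3 : ℝ)/2)) :
    ∃ ε > 0, ∀ x : ℝ, |x| < ε →
      HasSum (fun p : ℕ => wcoef h p * x ^ p) (Wfun h lam x) := by
  have hpos : 0 < h := hh.1
  have hc : 0 < 4 * (1 + 8 * h) := by linarith
  have hlam0 : lam ≠ 0 := by rw [hlam]; positivity
  refine ⟨1 / (4 * (1 + 8 * h)), by positivity, fun x hx => ?_⟩
  have hcx : |4 * (1 + 8 * h) * x| < 1 := by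
    rwa [abs_mul, abs_of_pos hc, ← lt_div_iff₀' hc]
  have hW := (((hasSum_sqrtOneSubMulCoeff hcx).one_sub_mul_mul_pow (b := (1 + 8 * h) / h)).mul_left
    (lam / 2)).add (hasSum_ite_eq 0 (x / 2))
  rw [← hasSum_nat_add_iff' 1, Finset.sum_range_one, show wcoef h 0 = 0 from if_pos rfl, zero_mul,
    sub_zero]
  have hcoeff : (fun n => wcoef h (n + 1) * x ^ (n + 1)) = fun n =>
      lam / 2 * ((sqrtOneSubMulCoeff (4 * (1 + 8 * h)) (n + 1)
        - (1 + 8 * h) / h * sqrtOneSubMulCoeff (4 * (1 + 8 * h)) n) * x ^ (n + 1))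
      + if n = 0 then x / 2 else 0 := by
    ext n
    rw [wcoef_succ hpos, ← hlam]
    split_ifs with hn
    · subst hn
      ring
    · ring
  have hvalue : Wfun h lam x = lam / 2 * ((1 - (1 + 8 * h) / h * x) * √(1 - 4 * (1 + 8 * h) * x)
      - sqrtOneSubMulCoeff (4 * (1 + 8 * h)) 0) + x / 2 := by
    rw [Wfun, sqrtOneSubMulCoeff_zero]
    field_simp
  rw [hcoeff, hvalue]
  exact hW
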